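/- arXiv:1908.08277 — 7 statements merged into one kernel-verified Lean document; each statement's English description precedes it below -/
import Mathlib

section
/- Let {N_α}_{α<k} be a k-small system on (X,G). Then N_∞ := ⋂_{α<k} N_α is a G-invariant ideal on X closed under unions of at most k sets. -/
open Set Cardinal Pointwise

universe u

variable {X : Type u}

/-- A class of sets is `k`-additive if it is closed under unions of at most `k` of its members. -/
def KAdd (k : Cardinal.{u}) (C : Set (Set X)) : Prop :=
  ∀ 𝒜 : Set (Set X), 𝒜 ⊆ C → #𝒜 ≤ k → ⋃₀ 𝒜 ∈ C

/-- An ideal of subsets of `X`. -/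
def IsIdeal (J : Set (Set X)) : Prop :=
  ∅ ∈ J ∧ (∀ A B : Set X, B ∈ J → A ⊆ B → A ∈ J) ∧
    (∀ A B : Set X, A ∈ J → B ∈ J → A ∪ B ∈ J)

/-- An algebra of subsets of `X`. -/
def IsAlg (S : Set (Set X)) : Prop :=
  Set.univ ∈ S ∧ (∀ A ∈ S, Aᶜ ∈ S) ∧ (∀ A ∈ S, ∀ B ∈ S, A ∪ B ∈ S)

/-- A `G`-invariant class of sets. -/
def Invar (G : Type u) [Group G] [MulAction G X] (C : Set (Set X)) : Prop :=
  ∀ (g : G), ∀ A ∈ C, g • A ∈ C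

/-- `N∞`: the intersection of the members of a `k`-small system. -/
def Ninf (k : Cardinal.{u}) (N : Ordinal.{u} → Set (Set X)) : Set (Set X) :=
  {A | ∀ α < k.ord, A ∈ N α}

/-- A `k`-small system on `(X, G)` (Definition 2.6). -/
def IsSmallSystem (G : Type u) [Group G] [MulAction G X]
    (k : Cardinal.{u}) (N : Ordinal.{u} → Set (Set X)) : Prop :=
  (∀ α < k.ord, ∅ ∈ N α) ∧
  (∀ α < k.ord, Invar G (N α)) ∧
  (∀ α < k.ord, ∀ E ∈ N α, ∀ F, F ⊆ E → F ∈ N α) ∧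
  (∀ α < k.ord, ∀ E ∈ N α, ∀ F ∈ Ninf k N, E ∪ F ∈ N α) ∧
  (∀ α < k.ord, ∃ αs, α < αs ∧ αs < k.ord ∧
    ∀ E : Ordinal.{u} → Set X, (∀ β, αs < β → β < k.ord → E β ∈ N β) →
      (⋃ β ∈ {β | αs < β ∧ β < k.ord}, E β) ∈ N α) ∧
  (∀ α < k.ord, ∀ β < k.ord, ∃ γ < k.ord, α < γ ∧ β < γ ∧ N γ ⊆ N α ∧ N γ ⊆ N β)

theorem Cardinal.exists_injective_mem_Ioo_ord {α : Type u} {k : Cardinal.{u}} (hk : ℵ₀ ≤ k)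
    (hα : #α ≤ k) {a : Ordinal.{u}} (ha : a < k.ord) :
    ∃ ι : α → Ordinal.{u}, Function.Injective ι ∧ ∀ x, ι x ∈ Ioo a k.ord := by
  rw [← card_ord k, ← mk_toType] at hα
  obtain ⟨f⟩ := hα
  let idx : α → Ordinal.{u} := fun x => (Ordinal.ToType.mk.symm (f x) : Iio k.ord)
  have hidx : ∀ x, idx x < k.ord := fun x => (Ordinal.ToType.mk.symm (f x)).2
  have hidx_inj : Function.Injective idx :=
    Subtype.val_injective.comp (Ordinal.ToType.mk.symm.injective.comp f.injective)
  have hsucc : a + 1 < k.ord :=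
    Ordinal.isPrincipal_add_ord hk ha (Ordinal.one_lt_omega0.trans_le (omega0_le_ord.2 hk))
  refine ⟨fun x => a + 1 + idx x, fun x y hxy => hidx_inj (add_left_cancel hxy), fun x => ⟨?_, ?_⟩⟩
  · exact (lt_add_one a).trans_le le_self_add
  · exact Ordinal.isPrincipal_add_ord hk hsucc (hidx x)

namespace IsSmallSystem

variable {G : Type u} [Group G] [MulAction G X] {k : Cardinal.{u}} {N : Ordinal.{u} → Set (Set X)}

theorem empty_mem_ninf (hN : IsSmallSystem G k N) : ∅ ∈ Ninf k N :=
  hN.1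

theorem isIdeal_ninf (hN : IsSmallSystem G k N) : IsIdeal (Ninf k N) :=
  ⟨hN.empty_mem_ninf, fun _ B hB hAB α hα => hN.2.2.1 α hα B (hB α hα) _ hAB,
    fun A _ hA hB α hα => hN.2.2.2.1 α hα A (hA α hα) _ hB⟩

theorem invar_ninf (hN : IsSmallSystem G k N) : Invar G (Ninf k N) :=
  fun g A hA α hα => hN.2.1 α hα g A (hA α hα)

/-- Condition (v) applied to the members of `𝒜`, placed injectively at ordinals above `α*`
(there is room since `k` is infinite). -/
theorem kAdd_ninf (hN : IsSmallSystem G k N) (hk : ℵ₀ ≤ k) : KAdd k (Ninf k N) := by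
  intro 𝒜 h𝒜 h𝒜k α hα
  obtain ⟨αs, -, hαs, hunion⟩ := hN.2.2.2.2.1 α hα
  obtain ⟨ι, hι, hιmem⟩ := exists_injective_mem_Ioo_ord hk h𝒜k hαs
  let E : Ordinal.{u} → Set X := Function.extend ι Subtype.val fun _ => ∅
  have hEι : ∀ A, E (ι A) = A := hι.extend_apply _ _
  have hE : ∀ β, E β ∈ Ninf k N := by
    intro β
    by_cases h : ∃ A, ι A = β
    · obtain ⟨A, rfl⟩ := h
      rw [hEι]
      exact h𝒜 A.2
    · have hEβ : E β = ∅ := Function.extend_apply' _ _ _ h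
      rw [hEβ]
      exact hN.empty_mem_ninf
  have hsub : ⋃₀ 𝒜 ⊆ ⋃ β ∈ {β | αs < β ∧ β < k.ord}, E β := by
    rintro x ⟨A, hA, hxA⟩
    refine mem_biUnion (hιmem ⟨A, hA⟩) ?_
    rwa [hEι]
  exact hN.2.2.1 α hα _ (hunion E fun β _ hβ => hE β β hβ) _ hsub

end IsSmallSystem

/-- for a `k`-small system `{N_α}_{α<k}` on `(X,G)`, the class
`N∞ = ⋂_{α<k} N_α` is a `G`-invariant `k`-additive ideal on `X`. -/
theorem stmt_3 {G : Type u} [Group G] [MulAction G X]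
    (k : Cardinal.{u}) (hk : ℵ₀ ≤ k) (N : Ordinal.{u} → Set (Set X))
    (hN : IsSmallSystem G k N) :
    IsIdeal (Ninf k N) ∧ Invar G (Ninf k N) ∧ KAdd k (Ninf k N) :=
  ⟨hN.isIdeal_ninf, hN.invar_ninf, hN.kAdd_ninf hk⟩
end

section
/- Let S be a k-additive algebra on (X,G) admissible with respect to a k-small system {N_α}_{α<k}, and let N_∞ = ⋂_{α<k} N_α. Let S̃ be the k-additive algebra generated by S and N_∞, whose elements have the form (A∖Y)∪Z with A ∈ S and Y, Z ∈ N_∞. Then the k-additive measurable structure (S̃, N_∞) is k⁺-saturated: every family of pairwise disjoint sets in S̃∖N_∞ has cardinality at most k. -/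
/-!
A set `(A \ Y) ∪ Z ∈ S̃ \ N∞` has `A ∉ N α` for some `α`. Regularity and directedness of the
small system give `γ` with `N γ ∪ N γ ⊆ N α`; enlarging `Y` to an `S`-set `F ∈ N γ`, the set
`A \ F ∈ S` lies inside `(A \ Y) ∪ Z` and is not in `N γ`, since otherwise `A ⊆ (A \ F) ∪ F`
would be in `N α`. Grouping a disjoint family in `S̃ \ N∞` by these indices `γ`, each group
yields a disjoint family in `S \ N γ`, of size at most `k` by admissibility; there are `k`
indices, and `k · k = k`.
-/

open Set Cardinal Pointwise

universe u

variable {X : Type u}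

/-- Admissibility of a `k`-additive algebra `S` with respect to a
`k`-small system (Definition 2.7). -/
def Admissible (k : Cardinal.{u}) (S : Set (Set X))
    (N : Ordinal.{u} → Set (Set X)) : Prop :=
  (∃ α < k.ord, (S \ N α).Nonempty) ∧
  (∀ α < k.ord, (S ∩ N α).Nonempty) ∧
  (∀ α < k.ord, ∀ E ∈ N α, ∃ F ∈ N α ∩ S, E ⊆ F) ∧
  (∀ α < k.ord, ∀ D : Set (Set X), D ⊆ S → (∀ B ∈ D, B ∉ N α) →
    D.PairwiseDisjoint id → #D ≤ k)

/-- The `k`-additive algebra generated by `S` and an ideal `Nf`: its members are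
the sets of the form `(A \ Y) ∪ Z` with `A ∈ S` and `Y, Z ∈ Nf`. -/
def Stilde (S Nf : Set (Set X)) : Set (Set X) :=
  {B | ∃ A ∈ S, ∃ Y ∈ Nf, ∃ Z ∈ Nf, B = (A \ Y) ∪ Z}

/-- A set `E` is `(S, J)`-thick if every `B ∈ S` with `B ⊆ X \ E` lies in `J`. -/
def Thick (S J : Set (Set X)) (E : Set X) : Prop :=
  ∀ B ∈ S, B ⊆ Eᶜ → B ∈ J

theorem Cardinal.mk_le_of_forall_mk_preimage_le {α : Type u} {k : Cardinal.{u}} (hk : ℵ₀ ≤ k)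
    (f : α → Iio k.ord) (hf : ∀ β, #(f ⁻¹' {β}) ≤ k) : #α ≤ k := by
  have h := lift_mk_le_lift_mk_mul_of_lift_mk_preimage_le (c := lift.{u + 1} k) f
    fun β => lift_le.2 (hf β)
  rwa [mk_Iio_ordinal, card_ord, lift_lift, ← lift_mul, mul_eq_self hk, lift_le] at h

theorem IsAlg.diff_mem {S : Set (Set X)} (hS : IsAlg S) {A F : Set X} (hA : A ∈ S)
    (hF : F ∈ S) : A \ F ∈ S := by
  simpa [compl_union, sdiff_eq] using hS.2.1 _ (hS.2.2 _ (hS.2.1 A hA) F hF)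

theorem IsSmallSystem.exists_union_mem {G : Type u} [Group G] [MulAction G X]
    {k : Cardinal.{u}} (hk : ℵ₀ ≤ k) {N : Ordinal.{u} → Set (Set X)}
    (hN : IsSmallSystem G k N) {α : Ordinal.{u}} (hα : α < k.ord) :
    ∃ γ < k.ord, ∀ C ∈ N γ, ∀ F ∈ N γ, C ∪ F ∈ N α := by
  obtain ⟨h0, -, hher, -, hreg, hdir⟩ := hN
  obtain ⟨αs, -, hαs, hreg⟩ := hreg α hα
  have hβ₁ : Order.succ αs < k.ord := (isSuccLimit_ord hk).succ_lt hαs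
  have hβ₂ : Order.succ (Order.succ αs) < k.ord := (isSuccLimit_ord hk).succ_lt hβ₁
  obtain ⟨γ, hγ, -, -, hγ₁, hγ₂⟩ := hdir _ hβ₁ _ hβ₂
  refine ⟨γ, hγ, fun C hC F hF => ?_⟩
  let E : Ordinal.{u} → Set X := fun β =>
    if β = Order.succ αs then C else if β = Order.succ (Order.succ αs) then F else ∅
  have hE : ∀ β, αs < β → β < k.ord → E β ∈ N β := by
    intro β _ hβ
    simp only [E]
    split_ifs with h₁ h₂
    · exact h₁ ▸ hγ₁ hC
    · exact h₂ ▸ hγ₂ hF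
    · exact h0 β hβ
  have hE_sub : ∀ β, αs < β → β < k.ord → E β ⊆ ⋃ β ∈ {β | αs < β ∧ β < k.ord}, E β :=
    fun β h₁ h₂ =>
      subset_biUnion_of_mem (u := E) (show β ∈ {β | αs < β ∧ β < k.ord} from ⟨h₁, h₂⟩)
  have hne : Order.succ (Order.succ αs) ≠ Order.succ αs := (Order.lt_succ _).ne'
  refine hher α hα _ (hreg E hE) _ (union_subset ?_ ?_)
  · simpa [E] using hE_sub _ (Order.lt_succ αs) hβ₁
  · simpa [E, hne] using hE_sub _ ((Order.lt_succ αs).trans (Order.lt_succ _)) hβ₂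

theorem Admissible.mk_le_of_pairwise_disjoint {k : Cardinal.{u}} {S : Set (Set X)}
    {N : Ordinal.{u} → Set (Set X)} (hadm : Admissible k S N) {α : Ordinal.{u}}
    (hα : α < k.ord) (h0 : ∅ ∈ N α) {ι : Type u} (C : ι → Set X) (hCS : ∀ i, C i ∈ S)
    (hCN : ∀ i, C i ∉ N α) (hC : Pairwise fun i j => Disjoint (C i) (C j)) : #ι ≤ k := by
  have hinj : Function.Injective C := fun i j hij => by
    by_contra hne
    have hempty : C i = ∅ := disjoint_self.1 (by simpa [hij] using hC hne)
    exact hCN i (hempty ▸ h0)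
  rw [← mk_range_eq C hinj]
  refine hadm.2.2.2 α hα _ (range_subset_iff.2 hCS) (forall_mem_range.2 hCN) ?_
  exact pairwiseDisjoint_range_iff.2 fun i j hij => hC fun h => hij (h ▸ rfl)

theorem exists_mem_diff_subset_of_mem_Stilde {G : Type u} [Group G] [MulAction G X]
    {k : Cardinal.{u}} (hk : ℵ₀ ≤ k) {S : Set (Set X)} (hS : IsAlg S)
    {N : Ordinal.{u} → Set (Set X)} (hN : IsSmallSystem G k N) (hadm : Admissible k S N)
    {B : Set X} (hB : B ∈ Stilde S (Ninf k N)) (hBN : B ∉ Ninf k N) :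
    ∃ γ < k.ord, ∃ C ∈ S \ N γ, C ⊆ B := by
  obtain ⟨A, hA, Y, hY, Z, hZ, rfl⟩ := hB
  have hher := hN.2.2.1
  obtain ⟨α, hα, hAα⟩ : ∃ α < k.ord, A ∉ N α := by
    by_contra! h
    exact hBN fun α hα => hher α hα _ (hN.2.2.2.1 α hα A (h α hα) Z hZ) _
      (union_subset_union_left Z sdiff_subset)
  obtain ⟨γ, hγ, hunion⟩ := hN.exists_union_mem hk hα
  obtain ⟨F, ⟨hFN, hFS⟩, hYF⟩ := hadm.2.2.1 γ hγ Y (hY γ hγ)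
  refine ⟨γ, hγ, A \ F, ⟨hS.diff_mem hA hFS, fun hAF => hAα ?_⟩,
    subset_union_of_subset_left (sdiff_subset_sdiff_right hYF) Z⟩
  exact hher α hα _ (hunion _ hAF _ hFN) A (subset_sdiff_union A F)

theorem stmt_4_general {G : Type u} [Group G] [MulAction G X]
    (k : Cardinal.{u}) (hk : ℵ₀ ≤ k)
    (S : Set (Set X)) (hS : IsAlg S)
    (N : Ordinal.{u} → Set (Set X)) (hN : IsSmallSystem G k N)
    (hadm : Admissible k S N) :
    ∀ D : Set (Set X), D ⊆ Stilde S (Ninf k N) → (∀ B ∈ D, B ∉ Ninf k N) →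
      D.PairwiseDisjoint id → #D ≤ k := by
  intro D hD hDN hDdisj
  choose γ hγ C hC hCB using fun B : D =>
    exists_mem_diff_subset_of_mem_Stilde hk hS hN hadm (hD B.2) (hDN B B.2)
  refine mk_le_of_forall_mk_preimage_le hk (fun B => ⟨γ B, hγ B⟩) fun β => ?_
  refine hadm.mk_le_of_pairwise_disjoint β.2 (hN.1 β β.2) (fun B : _ ⁻¹' {β} => C B)
    (fun B => (hC B).1) (fun B => ?_) fun i j hij => ?_
  · have hB : γ B = β := congrArg Subtype.val B.2
    exact hB ▸ (hC B).2
  · have hne : (i.1 : Set X) ≠ j.1 := fun h => hij (Subtype.ext (Subtype.ext h))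
    exact (hDdisj i.1.2 j.1.2 hne).mono (hCB i) (hCB j)

/-- Theorem 2.8: if `S` is admissible with respect to the `k`-small
system `{N_α}`, then the `k`-additive measurable structure `(S̃, N∞)` is
`k⁺`-saturated: every pairwise disjoint family in `S̃ \ N∞` has cardinality at most `k`. -/
theorem stmt_4 {G : Type u} [Group G] [MulAction G X]
    (k : Cardinal.{u}) (hk : ℵ₀ ≤ k)
    (S : Set (Set X)) (hS : IsAlg S) (hSadd : KAdd k S) (hSinv : Invar G S)
    (N : Ordinal.{u} → Set (Set X)) (hN : IsSmallSystem G k N)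
    (hadm : Admissible k S N) :
    ∀ D : Set (Set X), D ⊆ Stilde S (Ninf k N) → (∀ B ∈ D, B ∉ Ninf k N) →
      D.PairwiseDisjoint id → #D ≤ k :=
  stmt_4_general k hk S hS N hN hadm
end

section
/- Let E be an infinite set and k an infinite cardinal with card(E)^k = card(E). Then there exists a strictly k-independent family {A_i : i ∈ I} of subsets of E with card(I) = 2^{card(E)}. -/
open Set Cardinal Function

universe u

/-!
Realise the family on the set of "patterns" `(F, G)`, where `F : K → E` and `G` lists at most
`k` subsets of `K` (here `#K = k`, and `none` marks an unused slot); the hypothesis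
`#E ^ k = #E` makes this set equinumerous with `E`. The set `X ⊆ E` is sent to the patterns for
which `F ⁻¹' X` is among the listed sets. Given `k` sets `X` and a choice of sides, take `F` to
hit a point of `X ∆ Y` for every pair of distinct sets among them, so that `X ↦ F ⁻¹' X` is
injective on them, and let `G` list the `F ⁻¹' X` on the prescribed side.
-/

theorem exists_forall_some_mem_range_iff {α K : Type u} (s : Set α) (hs : #s ≤ #K) :
    ∃ G : K → Option α, ∀ a, some a ∈ range G ↔ a ∈ s := by
  obtain ⟨ι⟩ := hs
  refine ⟨extend ι (fun a => some (a : α)) fun _ => none, fun a =>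
    ⟨?_, fun ha => ⟨ι ⟨a, ha⟩, ι.injective.extend_apply _ _ _⟩⟩⟩
  rintro ⟨i, hi⟩
  by_cases h : ∃ b, ι b = i
  · obtain ⟨b, rfl⟩ := h
    rw [ι.injective.extend_apply] at hi
    exact Option.some.inj hi ▸ b.2
  · simp [extend_apply' _ _ _ h] at hi

theorem exists_injOn_preimage {E K : Type u} [Nonempty E] (S : Set (Set E))
    (hS : #(S × S) ≤ #K) : ∃ F : K → E, InjOn (F ⁻¹' ·) S := by
  obtain ⟨ι⟩ := hS
  have hwit : ∀ q : S × S, ∃ x, (q.1 : Set E) ≠ q.2 → x ∈ symmDiff (q.1 : Set E) q.2 := by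
    intro q
    by_cases h : (q.1 : Set E) = q.2
    · exact ⟨Classical.arbitrary E, fun h' => absurd h h'⟩
    · obtain ⟨x, hx⟩ := symmDiff_nonempty.2 h
      exact ⟨x, fun _ => hx⟩
  choose w hw using hwit
  set F : K → E := extend ι w fun _ => Classical.arbitrary E
  refine ⟨F, fun X hX Y hY hXY => by_contra fun hne => ?_⟩
  have hmem : ι (⟨X, hX⟩, ⟨Y, hY⟩) ∈ F ⁻¹' symmDiff X Y := by
    simpa only [mem_preimage, F, ι.injective.extend_apply] using hw (⟨X, hX⟩, ⟨Y, hY⟩) hne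
  rw [preimage_symmDiff, show F ⁻¹' X = F ⁻¹' Y from hXY, symmDiff_self] at hmem
  exact hmem

section Pattern

abbrev PatternSpace (E K : Type u) := (K → E) × (K → Option (Set K))

variable {E : Type u} (K : Type u)

def patternSet (X : Set E) : Set (PatternSpace E K) :=
  {p | some (p.1 ⁻¹' X) ∈ range p.2}

variable {K}

theorem patternSet_injective [Nonempty K] : Injective (patternSet K : Set E → _) := by
  have hmono : ∀ X Y : Set E, patternSet K X ⊆ patternSet K Y → X ⊆ Y := by
    intro X Y h a ha
    obtain ⟨i, hi⟩ := h (show ((fun _ => a), fun _ => some Set.univ) ∈ patternSet K X from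
      ⟨Classical.arbitrary K, by simp [ha]⟩)
    by_contra haY
    simp [haY] at hi
  exact fun X Y h => (hmono X Y h.le).antisymm (hmono Y X h.ge)

theorem exists_forall_mem_patternSet_iff [Nonempty E] (hK : ℵ₀ ≤ #K) {S S₀ : Set (Set E)}
    (hS : #S ≤ #K) (hS₀ : S₀ ⊆ S) : ∃ p, ∀ X ∈ S, p ∈ patternSet K X ↔ X ∈ S₀ := by
  obtain ⟨F, hF⟩ := exists_injOn_preimage (K := K) S
    (by rw [mk_prod, lift_id, ← mul_eq_self hK]; exact mul_le_mul' hS hS)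
  obtain ⟨G, hG⟩ := exists_forall_some_mem_range_iff (K := K) ((F ⁻¹' ·) '' S₀)
    (mk_image_le.trans ((mk_le_mk_of_subset hS₀).trans hS))
  exact ⟨(F, G), fun X hX => (hG _).trans (hF.mem_image_iff hS₀ hX)⟩

theorem mk_patternSpace (hE : ℵ₀ ≤ #E) (hpow : #E ^ #K = #E) : #(PatternSpace E K) = #E := by
  have hoption : #(Option (Set K)) ≤ #E := by
    rw [mk_option, mk_set]
    calc 2 ^ #K + 1 ≤ #E + #E :=
          add_le_add (hpow ▸ power_le_power_right ((natCast_lt_aleph0 (n := 2)).le.trans hE))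
            (one_le_aleph0.trans hE)
      _ = #E := add_eq_self hE
  have harrow : #(K → E) = #E := by rw [← power_def, hpow]
  apply le_antisymm
  · rw [mk_prod, lift_id, lift_id, harrow, ← power_def]
    calc #E * #(Option (Set K)) ^ #K ≤ #E * #E ^ #K :=
          mul_le_mul' le_rfl (power_le_power_right hoption)
      _ = #E := by rw [hpow, mul_eq_self hE]
  · rw [← harrow]
    exact mk_le_of_injective (Prod.mk_left_injective fun _ => none)

end Pattern

/-- Proposition 2.12: if `E` is infinite with `card(E) ^ k = card(E)`,
there is a strictly `k`-independent family of subsets of `E` of cardinality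
`2 ^ card(E)`. -/
theorem stmt_6 {E : Type u} (hE : ℵ₀ ≤ #E) (k : Cardinal.{u}) (hk : ℵ₀ ≤ k)
    (hpow : #E ^ k = #E) :
    ∃ I : Set (Set E), #I = 2 ^ #E ∧
      ∀ J ⊆ I, #J ≤ k → ∀ f : Set E → Bool,
        (⋂ A ∈ J, if f A then Aᶜ else A).Nonempty := by
  have hK : #k.out = k := mk_out k
  have : Nonempty k.out := mk_ne_zero_iff.1 (by rw [hK]; exact (aleph0_pos.trans_le hk).ne')
  have : Nonempty E := mk_ne_zero_iff.1 (aleph0_pos.trans_le hE).ne'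
  obtain ⟨e⟩ := Cardinal.eq.1 (mk_patternSpace (K := k.out) hE (by rwa [hK]))
  set A : Set E → Set E := fun X => e.symm ⁻¹' patternSet k.out X
  have hA : Injective A := e.symm.surjective.preimage_injective.comp patternSet_injective
  refine ⟨range A, by rw [mk_range_eq A hA, mk_set], fun J hJ hJk f => ?_⟩
  obtain ⟨p, hp⟩ := exists_forall_mem_patternSet_iff (by rwa [hK])
    (S₀ := {X ∈ A ⁻¹' J | f (A X) = false})
    (by rw [hK]; exact (mk_preimage_of_injective A J hA).trans hJk) (sep_subset _ _)
  refine ⟨e p, mem_iInter₂.2 fun B hB => ?_⟩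
  obtain ⟨X, rfl⟩ := hJ hB
  have hX := hp X hB
  cases hf : f (A X) <;> simp_all [A]
end

section
/- Let E be an infinite set. Then there exists an ω₀-independent family {A_i : i ∈ I} of subsets of E (i.e., independent with respect to all finite Boolean combinations) with card(I) = 2^{card(E)}. -/
open Set Cardinal

universe u

/-- Tarski: every infinite set `E` carries an independent
(`ω₀`-independent) family of subsets of cardinality `2 ^ card(E)`. -/
theorem stmt_7 {E : Type u} (hE : ℵ₀ ≤ #E) :
    ∃ I : Set (Set E), #I = 2 ^ #E ∧
      ∀ J ⊆ I, J.Finite → ∀ f : Set E → Bool,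
        (⋂ A ∈ J, if f A then Aᶜ else A).Nonempty := by
  classical
  have hinf : Infinite E := Cardinal.infinite_iff.mpr hE
  have hcard : #E = #(Finset E × Finset (Finset E)) := by
    simp [Cardinal.mk_prod, Cardinal.mk_finset_of_infinite, Cardinal.mul_eq_self hE]
  obtain ⟨e⟩ := Cardinal.eq.mp hcard
  set g : Set E → Set E := fun X => {x | (e x).1.filter (· ∈ X) ∈ (e x).2} with hgdef
  -- membership criterion
  have hmem : ∀ (F : Finset E) (𝓕 : Finset (Finset E)) (X : Set E),
      e.symm (F, 𝓕) ∈ g X ↔ F.filter (· ∈ X) ∈ 𝓕 := by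
    intro F 𝓕 X
    simp [hgdef, Set.mem_setOf_eq, Equiv.apply_symm_apply]
  -- nonempty symmetric difference
  have hsd : ∀ X Y : Set E, X ≠ Y → (symmDiff X Y).Nonempty := by
    intro X Y hXY
    rw [Set.nonempty_iff_ne_empty]
    intro h
    exact hXY (symmDiff_eq_bot.mp h)
  -- injectivity
  have hginj : Function.Injective g := by
    intro X Y h
    by_contra hXY
    obtain ⟨a, ha⟩ := hsd X Y hXY
    have key : ∀ Z : Set E, a ∈ Z ↔ e.symm (({a} : Finset E), ({{a}} : Finset (Finset E))) ∈ g Z := by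
      intro Z
      rw [hmem, Finset.filter_singleton]
      constructor
      · intro hZ; rw [if_pos hZ]; exact Finset.mem_singleton_self _
      · intro hZ
        by_contra hZ'
        rw [if_neg hZ'] at hZ
        simp only [Finset.mem_singleton] at hZ
        exact Finset.singleton_ne_empty a hZ.symm
    rw [Set.mem_symmDiff] at ha
    rcases ha with ⟨h1, h2⟩ | ⟨h1, h2⟩
    · exact h2 ((key Y).mpr (h ▸ (key X).mp h1))
    · exact h2 ((key X).mpr (h.symm ▸ (key Y).mp h1))
  refine ⟨Set.range g, ?_, ?_⟩
  · rw [Cardinal.mk_range_eq _ hginj, Cardinal.mk_set]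
  intro J hJ hJfin f
  -- preimage set
  set S : Set (Set E) := {X | g X ∈ J} with hSdef
  have hSfin : S.Finite := hJfin.preimage (hginj.injOn)
  -- separating finite set F
  set w : Set E → Set E → E := fun X Y =>
    if h : (symmDiff X Y).Nonempty then h.choose else Classical.arbitrary E with hwdef
  set F : Finset E := (hSfin.toFinset ×ˢ hSfin.toFinset).image (fun p => w p.1 p.2) with hFdef
  have hsep : ∀ X ∈ S, ∀ Y ∈ S, X ≠ Y → F.filter (· ∈ X) ≠ F.filter (· ∈ Y) := by
    intro X hX Y hY hXY
    have hne := hsd X Y hXY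
    have haw : w X Y ∈ symmDiff X Y := by
      simp only [hwdef, dif_pos hne]
      exact hne.choose_spec
    have haF : w X Y ∈ F := by
      rw [hFdef]
      apply Finset.mem_image.mpr
      exact ⟨(X, Y), Finset.mem_product.mpr ⟨hSfin.mem_toFinset.mpr hX, hSfin.mem_toFinset.mpr hY⟩, rfl⟩
    intro h
    rcases Set.mem_symmDiff.mp haw with ⟨hX1, hY1⟩ | ⟨hY1, hX1⟩
    · have : w X Y ∈ F.filter (· ∈ X) := Finset.mem_filter.mpr ⟨haF, hX1⟩
      rw [h] at this
      exact hY1 (Finset.mem_filter.mp this).2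
    · have : w X Y ∈ F.filter (· ∈ Y) := Finset.mem_filter.mpr ⟨haF, hY1⟩
      rw [← h] at this
      exact hX1 (Finset.mem_filter.mp this).2
  set 𝓕 : Finset (Finset E) :=
    (hSfin.toFinset.filter (fun X => f (g X) = false)).image (fun X => F.filter (· ∈ X)) with h𝓕def
  refine ⟨e.symm (F, 𝓕), ?_⟩
  rw [Set.mem_iInter₂]
  intro A hA
  obtain ⟨X, hXm, rfl⟩ : ∃ X, X ∈ S ∧ g X = A := by
    obtain ⟨X, rfl⟩ := hJ hA
    exact ⟨X, hA, rfl⟩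
  by_cases hf : f (g X) = true
  · rw [if_pos hf]
    intro hx
    rw [hmem] at hx
    rw [h𝓕def] at hx
    obtain ⟨Y, hYm, hYe⟩ := Finset.mem_image.mp hx
    rw [Finset.mem_filter] at hYm
    obtain ⟨hYS, hYf⟩ := hYm
    have hXY : X ≠ Y := by
      rintro rfl
      rw [hf] at hYf
      simp at hYf
    exact hsep X hXm Y (hSfin.mem_toFinset.mp hYS) hXY hYe.symm
  · rw [if_neg hf]
    rw [hmem, h𝓕def]
    apply Finset.mem_image.mpr
    refine ⟨X, Finset.mem_filter.mpr ⟨hSfin.mem_toFinset.mpr hXm, ?_⟩, rfl⟩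
    simpa using hf
end

section
/- Let k be an infinite cardinal. Then there exists an Ulam (k, k⁺)-matrix over k⁺: a doubly indexed family (Π_{ξ,ρ})_{ξ<k, ρ<k⁺} of subsets of k⁺ such that (a) for each fixed ξ < k, the sets Π_{ξ,ρ} (ρ < k⁺) are pairwise disjoint, and (b) for each fixed ρ < k⁺, the complement k⁺ ∖ ⋃_{ξ<k} Π_{ξ,ρ} has cardinality at most k. -/
/-!
Well-order `k⁺` as its initial ordinal. Every `β < k⁺` has at most `k` predecessors, so fix
injections `f_β : β ↪ k` and put `β` into `Π_{ξ,ρ}` iff `ρ < β` and `f_β ρ = ξ`. Injectivity of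
`f_β` makes each row disjoint, and every `β > ρ` lands in some `Π_{ξ,ρ}`, so the complement of
column `ρ` lies in `[0, ρ]`, which has at most `k` elements.
-/

open Set Cardinal

universe u

section UlamMatrix

variable {α K : Type*}

def ulamMatrix [Preorder α] (f : ∀ β : α, Iio β ↪ K) (ξ : K) (ρ : α) : Set α :=
  {β | ∃ h : ρ < β, f β ⟨ρ, h⟩ = ξ}

theorem ulamMatrix_pairwise_disjoint [Preorder α] (f : ∀ β : α, Iio β ↪ K) (ξ : K) :
    Pairwise fun ρ ρ' => Disjoint (ulamMatrix f ξ ρ) (ulamMatrix f ξ ρ') := by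
  intro ρ ρ' hne
  refine Set.disjoint_left.2 ?_
  rintro β ⟨_, rfl⟩ ⟨_, e⟩
  exact hne (congrArg Subtype.val ((f β).injective e.symm))

theorem compl_iUnion_ulamMatrix_subset_Iic [LinearOrder α] (f : ∀ β : α, Iio β ↪ K) (ρ : α) :
    (⋃ ξ, ulamMatrix f ξ ρ)ᶜ ⊆ Iic ρ := fun β hβ =>
  not_lt.1 fun h => hβ (mem_iUnion.2 ⟨f β ⟨ρ, h⟩, h, rfl⟩)

end UlamMatrix

namespace Cardinal

theorem mk_Iio_toType_ord_succ_le (k : Cardinal.{u}) (ρ : (Order.succ k).ord.ToType) :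
    #(Iio ρ) ≤ k :=
  Order.lt_succ_iff.1 <| by simpa using mk_Iio_lt ρ (by simp)

theorem mk_Iic_toType_ord_succ_le {k : Cardinal.{u}} (hk : ℵ₀ ≤ k)
    (ρ : (Order.succ k).ord.ToType) : #(Iic ρ) ≤ k :=
  Order.lt_succ_iff.1 <| by
    simpa using mk_Iic_lt ρ (by simp) (by simpa using hk.trans (Order.le_succ k))

end Cardinal

/-- existence of an Ulam `(k, k⁺)`-matrix over `k⁺`. -/
theorem stmt_8 (k : Cardinal.{u}) (hk : ℵ₀ ≤ k) :
    ∃ P : k.ord.ToType → (Order.succ k).ord.ToType → Set (Order.succ k).ord.ToType,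
      (∀ ξ, Pairwise fun ρ ρ' => Disjoint (P ξ ρ) (P ξ ρ')) ∧
      (∀ ρ, #((⋃ ξ, P ξ ρ)ᶜ : Set (Order.succ k).ord.ToType) ≤ k) := by
  have f : ∀ ρ : (Order.succ k).ord.ToType, Iio ρ ↪ k.ord.ToType := fun ρ =>
    ((le_def _ _).1 (by simpa using mk_Iio_toType_ord_succ_le k ρ)).some
  exact ⟨ulamMatrix f, ulamMatrix_pairwise_disjoint f, fun ρ =>
    (mk_le_mk_of_subset (compl_iUnion_ulamMatrix_subset_Iic f ρ)).trans
      (mk_Iic_toType_ord_succ_le hk ρ)⟩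
end

section
/- With notation as above (G acting freely on X, L a G-selector, Ω_γ = (G_γ ∖ ⋃_{η<γ} G_η)·L for an increasing union G = ⋃_{ξ<k⁺} G_ξ of subgroups of cardinality ≤ k), and for T ⊆ k⁺ set E_T = ⋃_{γ∈T} Ω_γ. Then for every g ∈ G, the symmetric difference g·E_T Δ E_T is contained in a union of at most k sets of the form g'·L with g' ∈ G. Consequently, if 𝔍 is a k-additive G-invariant ideal containing L, then every set E_T is almost G-invariant with respect to 𝔍. -/
/-!
Pick `ξ` with `g ∈ G_ξ`. For `γ > ξ`, left multiplication by `g` permutes the layer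
`G_γ ∖ ⋃_{η<γ} G_η`, so `g` fixes `Ω_γ`; for `γ ≤ ξ`, both `Ω_γ` and `g·Ω_γ` lie in `G_ξ·L`.
Hence `g·E_T Δ E_T ⊆ G_ξ·L`, a union of at most `k` translates of `L`, and such a union lies in
every `k`-additive `G`-invariant ideal containing `L`.
-/

open Set Cardinal Pointwise

universe u

variable {G X : Type u} [Group G] [MulAction G X]

/-- `Ω_γ = (G_γ \ ⋃_{η<γ} G_η) · L`. -/
def Omega {ι : Type u} [LinearOrder ι] (Gs : ι → Subgroup G) (L : Set X)
    (γ : ι) : Set X :=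
  ⋃ g ∈ ((Gs γ : Set G) \ ⋃ η ∈ Set.Iio γ, (Gs η : Set G)), g • L

def layer {ι : Type u} [LinearOrder ι] (Gs : ι → Subgroup G) (γ : ι) : Set G :=
  (Gs γ : Set G) \ ⋃ η ∈ Set.Iio γ, (Gs η : Set G)

section Layers

variable {ι : Type u} [LinearOrder ι] {Gs : ι → Subgroup G}

lemma Omega_eq_layer_smul (L : Set X) (γ : ι) : Omega Gs L γ = layer Gs γ • L :=
  Set.iUnion_smul_set (layer Gs γ) L

lemma layer_subset (hmono : Monotone Gs) {γ ξ : ι} (h : γ ≤ ξ) :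
    layer Gs γ ⊆ Gs ξ :=
  Set.sdiff_subset.trans (hmono h)

lemma smul_layer_subset (hmono : Monotone Gs) {a : G} {ξ γ : ι} (ha : a ∈ Gs ξ)
    (hξγ : ξ < γ) : a • layer Gs γ ⊆ layer Gs γ := by
  rintro _ ⟨h, ⟨hγ, hnew⟩, rfl⟩
  refine ⟨(Gs γ).mul_mem (hmono hξγ.le ha) hγ, ?_⟩
  simp only [Set.mem_iUnion, SetLike.mem_coe, Set.mem_Iio, not_exists] at hnew ⊢
  intro η hη hah
  -- `a⁻¹ (a h) = h` lies in `G_{max ξ η}`, and `max ξ η < γ`.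
  refine hnew (max ξ η) (max_lt hξγ hη) ?_
  simpa using (Gs (max ξ η)).mul_mem ((Gs _).inv_mem (hmono le_sup_left ha))
    (hmono le_sup_right hah)

lemma smul_layer_of_lt (hmono : Monotone Gs) {a : G} {ξ γ : ι} (ha : a ∈ Gs ξ)
    (hξγ : ξ < γ) : a • layer Gs γ = layer Gs γ :=
  (smul_layer_subset hmono ha hξγ).antisymm <| Set.subset_smul_set_iff.mpr <|
    smul_layer_subset hmono ((Gs ξ).inv_mem ha) hξγ

lemma smul_Omega_of_lt (hmono : Monotone Gs) (L : Set X) {a : G} {ξ γ : ι} (ha : a ∈ Gs ξ)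
    (hξγ : ξ < γ) : a • Omega Gs L γ = Omega Gs L γ := by
  rw [Omega_eq_layer_smul, ← smul_assoc, smul_layer_of_lt hmono ha hξγ]

lemma Omega_subset_of_le (hmono : Monotone Gs) (L : Set X) {γ ξ : ι} (h : γ ≤ ξ) :
    Omega Gs L γ ⊆ (Gs ξ : Set G) • L := by
  rw [Omega_eq_layer_smul]
  exact Set.smul_subset_smul_right (layer_subset hmono h)

lemma smul_biUnion_Omega_subset (hmono : Monotone Gs) (L : Set X) (T : Set ι) {a : G}
    {ξ : ι} (ha : a ∈ Gs ξ) :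
    a • ⋃ γ ∈ T, Omega Gs L γ ⊆ (⋃ γ ∈ T, Omega Gs L γ) ∪ (Gs ξ : Set G) • L := by
  rw [Set.smul_set_iUnion₂]
  refine Set.iUnion₂_subset fun γ hγ => ?_
  rcases lt_or_ge ξ γ with hξγ | hγξ
  · rw [smul_Omega_of_lt hmono L ha hξγ]
    exact (Set.subset_biUnion_of_mem (u := Omega Gs L) hγ).trans Set.subset_union_left
  · calc a • Omega Gs L γ ⊆ a • ((Gs ξ : Set G) • L) :=
          Set.smul_set_mono (Omega_subset_of_le hmono L hγξ)
      _ = (Gs ξ : Set G) • L := by rw [← smul_assoc, smul_coe_set ha]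
      _ ⊆ _ := Set.subset_union_right

lemma symmDiff_smul_biUnion_Omega_subset (hmono : Monotone Gs) (L : Set X) (T : Set ι)
    {g : G} {ξ : ι} (hg : g ∈ Gs ξ) :
    symmDiff (g • ⋃ γ ∈ T, Omega Gs L γ) (⋃ γ ∈ T, Omega Gs L γ) ⊆ (Gs ξ : Set G) • L := by
  refine symmDiff_le (smul_biUnion_Omega_subset hmono L T hg) ?_
  have hfix : g • ((Gs ξ : Set G) • L) = (Gs ξ : Set G) • L := by
    rw [← smul_assoc, smul_coe_set hg]
  change _ ⊆ (_ : Set X) ∪ _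
  rw [← hfix, ← Set.smul_set_union, Set.subset_smul_set_iff]
  exact smul_biUnion_Omega_subset hmono L T ((Gs ξ).inv_mem hg)

end Layers

lemma KAdd.biUnion_mem {k : Cardinal.{u}} {J : Set (Set X)} (hJ : KAdd k J) {ι : Type u}
    {D : Set ι} (hD : #D ≤ k) {A : ι → Set X} (hA : ∀ i ∈ D, A i ∈ J) :
    ⋃ i ∈ D, A i ∈ J := by
  rw [← Set.sUnion_image]
  exact hJ _ (Set.image_subset_iff.2 hA) (mk_image_le.trans hD)

theorem stmt_12_general (k : Cardinal.{u})
    (L : Set X)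
    (Gs : (Order.succ k).ord.ToType → Subgroup G)
    (hmono : Monotone Gs) (hcover : ∀ g : G, ∃ ξ, g ∈ Gs ξ)
    (hcard : ∀ ξ, #(Gs ξ) ≤ k) :
    ∀ T : Set (Order.succ k).ord.ToType, ∀ g : G,
      (∃ D : Set G, #D ≤ k ∧
        symmDiff (g • ⋃ γ ∈ T, Omega Gs L γ) (⋃ γ ∈ T, Omega Gs L γ) ⊆
          ⋃ g' ∈ D, g' • L) ∧
      (∀ J : Set (Set X), IsIdeal J → KAdd k J → Invar G J → L ∈ J →
        symmDiff (g • ⋃ γ ∈ T, Omega Gs L γ) (⋃ γ ∈ T, Omega Gs L γ) ∈ J) := by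
  intro T g
  obtain ⟨ξ, hg⟩ := hcover g
  have hcovered : symmDiff (g • ⋃ γ ∈ T, Omega Gs L γ) (⋃ γ ∈ T, Omega Gs L γ) ⊆
      ⋃ g' ∈ (Gs ξ : Set G), g' • L := by
    rw [Set.iUnion_smul_set]
    exact symmDiff_smul_biUnion_Omega_subset hmono L T hg
  refine ⟨⟨Gs ξ, hcard ξ, hcovered⟩, fun J hJ hadd hinv hLJ => ?_⟩
  exact hJ.2.1 _ _ (hadd.biUnion_mem (hcard ξ) fun g' _ => hinv g' L hLJ) hcovered

/-- for `E_T = ⋃_{γ∈T} Ω_γ`, every symmetric difference `g·E_T Δ E_T`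
is covered by at most `k` translates of `L`; consequently, if `𝔍` is a `k`-additive
`G`-invariant ideal containing `L`, each `E_T` is almost `G`-invariant w.r.t. `𝔍`. -/
theorem stmt_12 (k : Cardinal.{u}) (hk : ℵ₀ ≤ k)
    (hfree : ∀ (g : G) (x : X), g • x = x → g = 1)
    (L : Set X) (hL : ∀ x : X, ∃! y, y ∈ L ∩ MulAction.orbit G x)
    (Gs : (Order.succ k).ord.ToType → Subgroup G)
    (hmono : Monotone Gs) (hcover : ∀ g : G, ∃ ξ, g ∈ Gs ξ)
    (hcard : ∀ ξ, #(Gs ξ) ≤ k) :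
    ∀ T : Set (Order.succ k).ord.ToType, ∀ g : G,
      (∃ D : Set G, #D ≤ k ∧
        symmDiff (g • ⋃ γ ∈ T, Omega Gs L γ) (⋃ γ ∈ T, Omega Gs L γ) ⊆
          ⋃ g' ∈ D, g' • L) ∧
      (∀ J : Set (Set X), IsIdeal J → KAdd k J → Invar G J → L ∈ J →
        symmDiff (g • ⋃ γ ∈ T, Omega Gs L γ) (⋃ γ ∈ T, Omega Gs L γ) ∈ J) :=
  stmt_12_general k L Gs hmono hcover hcard
end

section
/- Let (X, S, μ) be a nonzero σ-finite measure space, and let Z ⊆ X be a set of μ-inner measure zero (every S-measurable subset of Z is μ-null). Let S' be the σ-algebra generated by S and Z. Then μ can be extended to a measure μ' on S' with μ'(Z) = 0. -/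
open MeasureTheory

universe u

/-- Marczewski's extension method: if `Z` has `μ`-inner measure zero
in a nonzero σ-finite measure space `(X, S, μ)`, then `μ` extends to a measure `μ'`
on the σ-algebra generated by `S` and `Z` with `μ'(Z) = 0`. -/
theorem stmt_17 {X : Type u} {m : MeasurableSpace X} (μ : Measure X)
    (hμ : μ ≠ 0) (hσ : SigmaFinite μ) (Z : Set X)
    (hZ : ∀ B : Set X, MeasurableSet B → B ⊆ Z → μ B = 0) :
    ∃ μ' : @Measure X (m ⊔ MeasurableSpace.generateFrom {Z}),
      (∀ A : Set X, MeasurableSet[m] A → μ' A = μ A) ∧ μ' Z = 0 := by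
  classical
  set ν : OuterMeasure X := OuterMeasure.restrict Zᶜ μ.toOuterMeasure with hν
  have hνapp : ∀ E : Set X, ν E = μ (E ∩ Zᶜ) := by
    intro E
    simp [hν, Measure.toOuterMeasure_apply]
  -- every `m`-measurable set is Caratheodory for ν
  have hmcar : ∀ A : Set X, MeasurableSet[m] A → ν.IsCaratheodory A := by
    intro A hA
    intro t
    have hcarA : μ.toOuterMeasure.IsCaratheodory A :=
      le_toOuterMeasure_caratheodory μ A hA
    have := hcarA (t ∩ Zᶜ)
    simp only [hνapp, Measure.toOuterMeasure_apply] at this ⊢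
    have h1 : t ∩ Zᶜ ∩ A = t ∩ A ∩ Zᶜ := by ext x; simp; tauto
    have h2 : (t ∩ Zᶜ) \ A = (t \ A) ∩ Zᶜ := by ext x; simp; tauto
    rw [h1, h2] at this
    exact this
  have hZcar : ν.IsCaratheodory Z := by
    intro t
    simp only [hνapp]
    have h1 : t ∩ Z ∩ Zᶜ = ∅ := by ext x; simp
    have h2 : (t \ Z) ∩ Zᶜ = t ∩ Zᶜ := by ext x; simp <;> tauto
    rw [h1, h2]
    simp
  have hle : (m ⊔ MeasurableSpace.generateFrom {Z}) ≤ ν.caratheodory := by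
    refine sup_le ?_ ?_
    · exact fun A hA => hmcar A hA
    · refine MeasurableSpace.generateFrom_le ?_
      rintro s rfl
      · exact hZcar
  refine ⟨@OuterMeasure.toMeasure X (m ⊔ MeasurableSpace.generateFrom {Z}) ν hle, ?_, ?_⟩
  · intro A hA
    have hA' : MeasurableSet[m ⊔ MeasurableSpace.generateFrom {Z}] A :=
      (le_sup_left : m ≤ _) A hA
    rw [@toMeasure_apply X (m ⊔ MeasurableSpace.generateFrom {Z}) ν hle A hA', hνapp]
    -- show μ (A ∩ Zᶜ) = μ A
    apply le_antisymm (measure_mono Set.inter_subset_left)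
    set B := toMeasurable μ (A ∩ Zᶜ) with hB
    have hBsub : A ∩ Zᶜ ⊆ B := subset_toMeasurable μ _
    have hBmeas : MeasurableSet B := measurableSet_toMeasurable μ _
    have hBμ : μ B = μ (A ∩ Zᶜ) := measure_toMeasurable _
    have hABZ : A \ B ⊆ Z := by
      intro x hx
      by_contra hxZ
      exact hx.2 (hBsub ⟨hx.1, hxZ⟩)
    have h0 : μ (A \ B) = 0 := hZ _ (hA.diff hBmeas) hABZ
    calc μ A ≤ μ (B ∪ (A \ B)) := measure_mono (by intro x hx; by_cases hxB : x ∈ B <;> simp [hxB, hx])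
      _ ≤ μ B + μ (A \ B) := measure_union_le _ _
      _ = μ (A ∩ Zᶜ) := by rw [h0, hBμ, add_zero]
  · have hZ' : MeasurableSet[m ⊔ MeasurableSpace.generateFrom {Z}] Z :=
      (le_sup_right : MeasurableSpace.generateFrom {Z} ≤ _) Z
        (MeasurableSpace.measurableSet_generateFrom rfl)
    rw [@toMeasure_apply X (m ⊔ MeasurableSpace.generateFrom {Z}) ν hle Z hZ', hνapp]
    have : Z ∩ Zᶜ = ∅ := by simp
    rw [this]; simp
end
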